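/- Let X be a Banach space, π an action of ℍ on X by linear isometric automorphisms, and f : ℍ → X a 1-Lipschitz 1-cocycle for π. Fix m, k ∈ ℕ, let f̃ := (I − P_m)∘f, and set v := −(1/k) ∑_{j=0}^{k−1} f̃(c^j). Then for every h ∈ ℍ: ‖f̃(h) − (π(h)v − v)‖ ≤ (2^m / k) · d_W(h, e). -/

import Mathlib

open scoped BigOperators

/-- The discrete Heisenberg group `ℍ`, realized via the coordinates of the
3×3 upper-triangular integer matrices `[[1, x, z], [0, 1, y], [0, 0, 1]]`
with unit diagonal. -/
@[ext] structure Heis where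
  x : ℤ
  y : ℤ
  z : ℤ

namespace Heis

instance : One Heis := ⟨⟨0, 0, 0⟩⟩
instance : Mul Heis := ⟨fun g h => ⟨g.x + h.x, g.y + h.y, g.z + h.z + g.x * h.y⟩⟩
instance : Inv Heis := ⟨fun g => ⟨-g.x, -g.y, -g.z + g.x * g.y⟩⟩

@[simp] lemma mul_def (g h : Heis) :
    g * h = ⟨g.x + h.x, g.y + h.y, g.z + h.z + g.x * h.y⟩ := rfl
@[simp] lemma one_def : (1 : Heis) = ⟨0, 0, 0⟩ := rfl
@[simp] lemma inv_def (g : Heis) : g⁻¹ = ⟨-g.x, -g.y, -g.z + g.x * g.y⟩ := rfl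

instance : Group Heis where
  mul_assoc g h k := by ext <;> simp <;> ring
  one_mul g := by ext <;> simp
  mul_one g := by ext <;> simp
  inv_mul_cancel g := by ext <;> simp <;> ring

/-- The generator `a`. -/
def A : Heis := ⟨1, 0, 0⟩
/-- The generator `b`. -/
def B : Heis := ⟨0, 1, 0⟩
/-- The commutator `c = a * b * a⁻¹ * b⁻¹`, a central element. -/
def C : Heis := A * B * A⁻¹ * B⁻¹
/-- The symmetric generating set `S = {a, b, a⁻¹, b⁻¹}`. -/
def S : Set Heis := {A, B, A⁻¹, B⁻¹}

/-- The word length of `g` with respect to the generating set `S`. -/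
noncomputable def wordLength (g : Heis) : ℕ :=
  sInf {n : ℕ | ∃ l : List Heis, l.length = n ∧ (∀ s ∈ l, s ∈ S) ∧ l.prod = g}

/-- The left-invariant word metric `d_W` on `ℍ` associated to `S`. -/
noncomputable def dW (g h : Heis) : ℕ := wordLength (g⁻¹ * h)

end Heis

/-- The averaging operator `P_n = 2^{−n}·∑_{j<2^n} π(c)^j` associated to an action `π` of
`ℍ` by linear isometric automorphisms, where `c = aba⁻¹b⁻¹`. -/
noncomputable def Pop {X : Type*} [NormedAddCommGroup X] [NormedSpace ℝ X]
    (π : Heis →* (X ≃ₗᵢ[ℝ] X)) (n : ℕ) (v : X) : X :=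
  ((2 : ℝ) ^ n)⁻¹ • ∑ j ∈ Finset.range (2 ^ n), (π Heis.C ^ j) v

/-! Because `c` is central, comparing `f̃(h c^j)` with `f̃(c^j h)` shows that
`f̃(h) - (π(h)v - v)` is the average `(1/k) ∑_{j<k} T^j f̃(h)` with `T = π(c)`; here `f̃` is
again a cocycle because `I - P_m` commutes with `π`. Writing `N = 2^m`, the identity
`(∑_{j<k} T^j)(I - T^i) = (I - T^k)(∑_{l<i} T^l)` turns
`(∑_{j<k} T^j)(I - P_m) = N⁻¹ ∑_{i<N} (∑_{j<k} T^j)(I - T^i)` into an operator of norm at most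
`N⁻¹ ∑_{i<N} 2i ≤ N`, independently of `k`. Finally `‖f(h)‖ ≤ d_W(h, e)` since `f(e) = 0`. -/

open Finset

namespace Representation

section

variable {R G X : Type*} [CommRing R] [Monoid G] [AddCommGroup X] [Module R X]

def IsOneCocycle (ρ : Representation R G X) (f : G → X) : Prop :=
  ∀ g h, f (g * h) = ρ g (f h) + f g

namespace IsOneCocycle

variable {ρ : Representation R G X} {f : G → X}

theorem map_one (hf : ρ.IsOneCocycle f) : f 1 = 0 := by
  simpa using hf 1 1

theorem apply_sub_of_commute (hf : ρ.IsOneCocycle f) {g h : G} (hgh : Commute g h) :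
    ρ g (f h) - f h = ρ h (f g) - f g := by
  rw [sub_eq_sub_iff_add_eq_add, ← hf, ← hf, hgh.eq]

theorem comp (hf : ρ.IsOneCocycle f) {P : Module.End R X} (hP : ∀ g, Commute P (ρ g)) :
    ρ.IsOneCocycle (fun g => P (f g)) := fun g h => by
  show P (f (g * h)) = ρ g (P (f h)) + P (f g)
  rw [hf, map_add, ← Module.End.mul_apply, (hP g).eq, Module.End.mul_apply]

end IsOneCocycle

end

theorem IsOneCocycle.sub_coboundary_eq_average {𝕜 G X : Type*} [Field 𝕜] [CharZero 𝕜] [Monoid G]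
    [AddCommGroup X] [Module 𝕜 X] {ρ : Representation 𝕜 G X} {f : G → X}
    (hf : ρ.IsOneCocycle f) {z : G} (hz : ∀ g, Commute z g) {k : ℕ} (hk : k ≠ 0) (h : G) :
    let v := -((k : 𝕜)⁻¹ • ∑ j ∈ range k, f (z ^ j))
    f h - (ρ h v - v) = (k : 𝕜)⁻¹ • ∑ j ∈ range k, (ρ z ^ j) (f h) := by
  intro v
  have hsum : ∑ j ∈ range k, (ρ h (f (z ^ j)) - f (z ^ j))
      = ∑ j ∈ range k, (ρ z ^ j) (f h) - k • f h := by
    simp_rw [hf.apply_sub_of_commute ((hz h).pow_left _).symm, map_pow, sum_sub_distrib,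
      sum_const, card_range]
  have hk' : (k : 𝕜) ≠ 0 := Nat.cast_ne_zero.mpr hk
  calc f h - (ρ h v - v) = f h + (k : 𝕜)⁻¹ • ∑ j ∈ range k, (ρ h (f (z ^ j)) - f (z ^ j)) := by
        simp only [v, map_neg, map_smul, map_sum, sum_sub_distrib, smul_sub]; abel
    _ = _ := by
        rw [hsum, smul_sub, ← Nat.cast_smul_eq_nsmul 𝕜, smul_smul, inv_mul_cancel₀ hk', one_smul]
        abel

def ofIsometries {R G X : Type*} [CommRing R] [Monoid G] [SeminormedAddCommGroup X]
    [Module R X] (π : G →* (X ≃ₗᵢ[R] X)) : Representation R G X where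
  toFun g := (π g).toLinearEquiv.toLinearMap
  map_one' := by ext; simp
  map_mul' _ _ := by ext; simp

@[simp]
theorem ofIsometries_apply {R G X : Type*} [CommRing R] [Monoid G] [SeminormedAddCommGroup X]
    [Module R X] (π : G →* (X ≃ₗᵢ[R] X)) (g : G) (u : X) : ofIsometries π g u = π g u :=
  rfl

end Representation

theorem geom_sum_mul_one_sub_pow {R : Type*} [Ring R] (x : R) (k i : ℕ) :
    (∑ j ∈ range k, x ^ j) * (1 - x ^ i) = (1 - x ^ k) * ∑ l ∈ range i, x ^ l := by
  rw [← mul_neg_geom_sum, ← mul_assoc, geom_sum_mul_neg]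

theorem geom_sum_mul_one_sub_average {𝕜 R : Type*} [Field 𝕜] [CharZero 𝕜] [Ring R] [Algebra 𝕜 R]
    (x : R) (k : ℕ) {n : ℕ} (hn : n ≠ 0) :
    (∑ j ∈ range k, x ^ j) * (1 - (n : 𝕜)⁻¹ • ∑ i ∈ range n, x ^ i)
      = (n : 𝕜)⁻¹ • ∑ i ∈ range n, (1 - x ^ k) * ∑ l ∈ range i, x ^ l := by
  have hn' : (n : 𝕜) ≠ 0 := Nat.cast_ne_zero.mpr hn
  have hsub : 1 - (n : 𝕜)⁻¹ • ∑ i ∈ range n, x ^ i = (n : 𝕜)⁻¹ • ∑ i ∈ range n, (1 - x ^ i) := by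
    rw [sum_sub_distrib, smul_sub, sum_const, card_range, ← Nat.cast_smul_eq_nsmul 𝕜, smul_smul,
      inv_mul_cancel₀ hn', one_smul]
  rw [hsub, mul_smul_comm, mul_sum]
  simp_rw [geom_sum_mul_one_sub_pow]

section Contraction

variable {X : Type*} [SeminormedAddCommGroup X] [NormedSpace ℝ X] {T : Module.End ℝ X}

theorem norm_pow_apply_le (hT : ∀ u, ‖T u‖ ≤ ‖u‖) (j : ℕ) (u : X) : ‖(T ^ j) u‖ ≤ ‖u‖ := by
  induction j with
  | zero => simp
  | succ j ih => rw [pow_succ', Module.End.mul_apply]; exact (hT _).trans ih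

theorem norm_geom_sum_apply_le (hT : ∀ u, ‖T u‖ ≤ ‖u‖) (i : ℕ) (u : X) :
    ‖(∑ l ∈ range i, T ^ l) u‖ ≤ i * ‖u‖ := by
  rw [LinearMap.sum_apply]
  refine (norm_sum_le _ _).trans ?_
  simpa using sum_le_sum fun l (_ : l ∈ range i) => norm_pow_apply_le hT l u

theorem norm_one_sub_pow_apply_le (hT : ∀ u, ‖T u‖ ≤ ‖u‖) (k : ℕ) (u : X) :
    ‖(1 - T ^ k) u‖ ≤ 2 * ‖u‖ := by
  rw [LinearMap.sub_apply, Module.End.one_apply, two_mul]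
  exact (norm_sub_le _ _).trans (add_le_add le_rfl (norm_pow_apply_le hT k u))

theorem norm_geom_sum_mul_one_sub_average_apply_le (hT : ∀ u, ‖T u‖ ≤ ‖u‖) (k : ℕ) {n : ℕ}
    (hn : n ≠ 0) (w : X) :
    ‖((∑ j ∈ range k, T ^ j) * (1 - (n : ℝ)⁻¹ • ∑ i ∈ range n, T ^ i)) w‖ ≤ n * ‖w‖ := by
  have hgauss : ∑ i ∈ range n, (2 * i : ℝ) ≤ n * n := by
    have h : (∑ i ∈ range n, i) * 2 ≤ n * n :=
      sum_range_id_mul_two n ▸ Nat.mul_le_mul_left n (Nat.sub_le n 1)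
    have h' := (Nat.cast_le (α := ℝ)).mpr h
    push_cast at h'
    rw [← mul_sum]
    linarith
  have hn' : (0 : ℝ) < n := by positivity
  rw [geom_sum_mul_one_sub_average T k hn, LinearMap.smul_apply, norm_smul, norm_inv,
    Real.norm_natCast, LinearMap.sum_apply, inv_mul_le_iff₀ hn']
  calc ‖∑ i ∈ range n, ((1 - T ^ k) * ∑ l ∈ range i, T ^ l) w‖
      ≤ ∑ i ∈ range n, 2 * i * ‖w‖ := by
        refine (norm_sum_le _ _).trans (sum_le_sum fun i _ => ?_)
        rw [Module.End.mul_apply, mul_assoc]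
        exact (norm_one_sub_pow_apply_le hT k _).trans
          (mul_le_mul_of_nonneg_left (norm_geom_sum_apply_le hT i w) zero_le_two)
    _ ≤ n * n * ‖w‖ := by rw [← sum_mul]; gcongr
    _ = n * (n * ‖w‖) := mul_assoc _ _ _

end Contraction

theorem Heis.commute_C (g : Heis) : Commute C g := by
  ext <;> simp [C, A, B, add_comm]

theorem heisenberg_cocycle_near_coboundary_general
    (X : Type*) [NormedAddCommGroup X] [NormedSpace ℝ X]
    (π : Heis →* (X ≃ₗᵢ[ℝ] X))
    (f : Heis → X) (hcocycle : ∀ g h : Heis, f (g * h) = π g (f h) + f g)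
    (hLip : ∀ g h : Heis, ‖f g - f h‖ ≤ (Heis.dW g h : ℝ))
    (m k : ℕ) (hk : 1 ≤ k)
    (ftilde : Heis → X) (hft : ∀ h : Heis, ftilde h = f h - Pop π m (f h))
    (v : X) (hv : v = -((k : ℝ)⁻¹ • ∑ j ∈ Finset.range k, ftilde (Heis.C ^ j))) :
    ∀ h : Heis,
      ‖ftilde h - (π h v - v)‖ ≤ (2 : ℝ) ^ m / (k : ℝ) * (Heis.dW h 1 : ℝ) := by
  intro h
  set ρ := Representation.ofIsometries π
  set T := ρ Heis.C
  set P : Module.End ℝ X := 1 - ((2 ^ m : ℕ) : ℝ)⁻¹ • ∑ i ∈ range (2 ^ m), T ^ i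
  have hT : ∀ u, ‖T u‖ ≤ ‖u‖ := fun u => ((π Heis.C).norm_map u).le
  have hf : ρ.IsOneCocycle f := hcocycle
  have hftP : ftilde = fun g => P (f g) := funext fun g => by
    simp [hft, Pop, P, LinearMap.sum_apply, T, ρ, ← map_pow]
  have hftc : ρ.IsOneCocycle ftilde := hftP ▸ hf.comp fun g =>
    (Commute.one_left _).sub_left <| (Commute.sum_left _ _ _ fun i _ =>
      ((Heis.commute_C g).map ρ).pow_left i).smul_left _
  have hfh : ‖f h‖ ≤ Heis.dW h 1 := by
    simpa only [hf.map_one, sub_zero] using hLip h 1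
  subst hv
  change ‖ftilde h - (ρ h _ - _)‖ ≤ _
  rw [hftc.sub_coboundary_eq_average Heis.commute_C (by omega) h, norm_smul, norm_inv,
    Real.norm_natCast, inv_mul_le_iff₀ (by positivity), hftP]
  calc ‖∑ j ∈ range k, (T ^ j) (P (f h))‖ = ‖((∑ j ∈ range k, T ^ j) * P) (f h)‖ := by
        rw [Module.End.mul_apply, LinearMap.sum_apply]
    _ ≤ (2 ^ m : ℕ) * ‖f h‖ := norm_geom_sum_mul_one_sub_average_apply_le hT k (by positivity) _
    _ ≤ k * (2 ^ m / k * Heis.dW h 1) := by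
        rw [← mul_assoc, mul_div_cancel₀ _ (by positivity)]
        push_cast
        gcongr

/-- **Inequality (4.9) ("close to a coboundary").** Let `X` be a Banach space, `π` an
action of `ℍ` on `X` by linear isometric automorphisms and `f : ℍ → X` a `1`-Lipschitz
`1`-cocycle. Fix `m, k ∈ ℕ`, let `f̃ = (I − P_m)∘f` and
`v = −(1/k)·∑_{j<k} f̃(c^j)`. Then for every `h ∈ ℍ`,
`‖f̃(h) − (π(h)v − v)‖ ≤ (2^m/k)·d_W(h, e)`. -/
theorem heisenberg_cocycle_near_coboundary
    (X : Type*) [NormedAddCommGroup X] [NormedSpace ℝ X]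
    (π : Heis →* (X ≃ₗᵢ[ℝ] X))
    (f : Heis → X) (hcocycle : ∀ g h : Heis, f (g * h) = π g (f h) + f g)
    (hLip : ∀ g h : Heis, ‖f g - f h‖ ≤ (Heis.dW g h : ℝ))
    (m k : ℕ) (hm : 1 ≤ m) (hk : 1 ≤ k)
    (ftilde : Heis → X) (hft : ∀ h : Heis, ftilde h = f h - Pop π m (f h))
    (v : X) (hv : v = -((k : ℝ)⁻¹ • ∑ j ∈ Finset.range k, ftilde (Heis.C ^ j))) :
    ∀ h : Heis,
      ‖ftilde h - (π h v - v)‖ ≤ (2 : ℝ) ^ m / (k : ℝ) * (Heis.dW h 1 : ℝ) :=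
  heisenberg_cocycle_near_coboundary_general X π f hcocycle hLip m k hk ftilde hft v hv
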